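/- Assume (A1), (A2), (A4), and (B1)–(B3), and assume in addition that X⁺ is a Hilbert space whose scalar product satisfies ⟨u,u⟩ = ‖u‖² for all u ∈ X⁺. Then assumption (A5) holds: for every u ∈ X∖X̃ there exists a point m̂(u) ∈ X̂(u)∖{0} which is a critical point of the restriction of J to X(u) (i.e. J'(m̂(u))[z] = 0 for all z ∈ X(u)), m̂(u) is the unique such critical point in X̂(u)∖{0}, and m̂(u) is the unique global maximum of J restricted to X̂(u). -/

import Mathlib

open Filter Topology

/-!
A maximizer of `J` on `X̂(u)` exists: (B2) makes `J` negative far out in the `u`-direction, and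
then (B1) bounds the region of `X̂(u)` where `J ≥ 0`, so a maximizing sequence is bounded. By
reflexivity it has a T-convergent subsequence, along which (A2) makes `J` upper semicontinuous.
By (A4) the maximum is positive, so the maximizer has a positive `u`-coefficient and is an interior
point of `X̂(u)` relative to `X(u)`, hence a critical point of `J|X(u)`.

Conversely, at a critical point `m` the relations `J'(m)[m] = 0` and `J'(m) = 0` on `X̃` turn
(B3) into `J(τm + v) < J(m)` for all `τ ≥ 0`, `v ∈ X̃` with `τm + v ≠ m`. A nontrivial critical
point is not in `X̃` (there `J ≤ 0 = J(0)`), so `X̂(u) = X̂(m)` and every nontrivial critical point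
is the strict maximum of `J` on `X̂(u)`; this gives uniqueness.
-/

open Set TopologicalSpace NormedSpace

section FunctionalAnalysis

variable {𝕜 X : Type*} [RCLike 𝕜] [NormedAddCommGroup X] [NormedSpace 𝕜 X]

theorem Submodule.exists_strongDual_apply_ne_zero_of_notMem {Y : Submodule 𝕜 X}
    (hY : IsClosed (Y : Set X)) {x : X} (hx : x ∉ Y) :
    ∃ φ : StrongDual 𝕜 X, φ x ≠ 0 ∧ ∀ y ∈ Y, φ y = 0 := by
  have : IsClosed (Y : Set X) := hY
  obtain ⟨f, hf⟩ := SeparatingDual.exists_ne_zero (R := 𝕜) (x := Y.mkQ x)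
    (by rwa [ne_eq, Submodule.mkQ_apply, Submodule.Quotient.mk_eq_zero])
  exact ⟨f.comp Y.mkQL, hf, fun y hy => by
    simp [(Submodule.Quotient.mk_eq_zero Y).2 hy]⟩

theorem Submodule.topologicalClosure_eq_top_of_forall_strongDual {p : Submodule 𝕜 X}
    (h : ∀ φ : StrongDual 𝕜 X, (∀ y ∈ p, φ y = 0) → φ = 0) : p.topologicalClosure = ⊤ := by
  refine eq_top_iff'.2 fun x => by_contra fun hx => ?_
  obtain ⟨φ, hφx, hφ⟩ := exists_strongDual_apply_ne_zero_of_notMem p.isClosed_topologicalClosure hx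
  exact hφx (by rw [h φ fun y hy => hφ y (p.le_topologicalClosure hy)]; rfl)

theorem Submodule.mem_of_forall_strongDual_tendsto {Y : Submodule 𝕜 X} (hY : IsClosed (Y : Set X))
    {y : ℕ → X} (hy : ∀ n, y n ∈ Y) {v : X}
    (hv : ∀ φ : StrongDual 𝕜 X, Tendsto (fun n => φ (y n)) atTop (𝓝 (φ v))) : v ∈ Y := by
  by_contra hvY
  obtain ⟨φ, hφv, hφ⟩ := Submodule.exists_strongDual_apply_ne_zero_of_notMem hY hvY
  exact hφv (tendsto_nhds_unique (hv φ) (tendsto_const_nhds.congr fun n => (hφ _ (hy n)).symm))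

theorem separableSpace_of_separableSpace_strongDual [SeparableSpace (StrongDual 𝕜 X)] :
    SeparableSpace X := by
  obtain ⟨φ, hφ⟩ := exists_dense_seq (StrongDual 𝕜 X)
  have hnorming : ∀ n, ∃ x : X, ‖x‖ ≤ 1 ∧ ‖φ n‖ / 2 ≤ ‖φ n x‖ := by
    intro n
    rcases eq_or_ne (φ n) 0 with h | h
    · exact ⟨0, by simp, by simp [h]⟩
    · obtain ⟨x, hx, hφx⟩ := (φ n).exists_lt_apply_of_lt_opNorm
        (r := ‖φ n‖ / 2) (by linarith [norm_pos_iff.2 h])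
      exact ⟨x, hx.le, hφx.le⟩
  choose x hx1 hx2 using hnorming
  -- `x n` almost norms `φ n`, so no `φ n` is close to a nonzero functional vanishing on all `x n`
  have hspan : (Submodule.span 𝕜 (range x)).topologicalClosure = ⊤ := by
    refine Submodule.topologicalClosure_eq_top_of_forall_strongDual fun ψ hψ => ?_
    by_contra hψ0
    have hψpos : 0 < ‖ψ‖ := norm_pos_iff.2 hψ0
    obtain ⟨n, hn⟩ := hφ.exists_dist_lt ψ (by positivity : 0 < ‖ψ‖ / 3)
    rw [dist_comm, dist_eq_norm] at hn
    have hψx : ψ (x n) = 0 := hψ _ (Submodule.subset_span ⟨n, rfl⟩)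
    have hφx : ‖φ n (x n)‖ ≤ ‖φ n - ψ‖ := calc
      ‖φ n (x n)‖ = ‖(φ n - ψ) (x n)‖ := by simp [hψx]
      _ ≤ ‖φ n - ψ‖ * ‖x n‖ := (φ n - ψ).le_opNorm _
      _ ≤ ‖φ n - ψ‖ := mul_le_of_le_one_right (norm_nonneg _) (hx1 n)
    linarith [hx2 n, norm_le_norm_add_norm_sub' ψ (φ n), norm_sub_rev ψ (φ n)]
  have hsep := ((countable_range x).isSeparable.span (R := 𝕜)).closure
  rw [← Submodule.topologicalClosure_coe, hspan, Submodule.top_coe] at hsep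
  exact isSeparable_univ_iff.1 hsep

theorem surjective_inclusionInDoubleDual_submodule
    (hrefl : Function.Surjective (inclusionInDoubleDual 𝕜 X))
    {Y : Submodule 𝕜 X} (hY : IsClosed (Y : Set X)) :
    Function.Surjective (inclusionInDoubleDual 𝕜 Y) := by
  intro Ξ
  let restrict : StrongDual 𝕜 X →L[𝕜] StrongDual 𝕜 Y :=
    ContinuousLinearMap.precomp 𝕜 Y.subtypeL
  obtain ⟨v, hv⟩ := hrefl (Ξ.comp restrict)
  have hvΞ : ∀ φ : StrongDual 𝕜 X, φ v = Ξ (restrict φ) := fun φ => by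
    simpa using congr($hv φ)
  have hvY : v ∈ Y := by
    by_contra hvY
    obtain ⟨φ, hφv, hφY⟩ := Submodule.exists_strongDual_apply_ne_zero_of_notMem hY hvY
    have : restrict φ = 0 := ContinuousLinearMap.ext fun y => hφY y y.2
    exact hφv (by rw [hvΞ, this, map_zero])
  refine ⟨⟨v, hvY⟩, ContinuousLinearMap.ext fun ψ => ?_⟩
  obtain ⟨φ, hφψ, -⟩ := exists_extension_norm_eq Y ψ
  have hres : restrict φ = ψ := ContinuousLinearMap.ext hφψ
  rw [dual_def, ← hres, ← hvΞ]
  rfl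

theorem exists_subseq_forall_strongDual_tendsto
    (hrefl : Function.Surjective (inclusionInDoubleDual 𝕜 X)) {y : ℕ → X} {C : ℝ}
    (hy : ∀ n, ‖y n‖ ≤ C) :
    ∃ v : X, ∃ σ : ℕ → ℕ, StrictMono σ ∧
      ∀ φ : StrongDual 𝕜 X, Tendsto (fun n => φ (y (σ n))) atTop (𝓝 (φ v)) := by
  -- reduce to the separable reflexive space spanned by the sequence, whose dual is separable
  set Y := (Submodule.span 𝕜 (range y)).topologicalClosure
  have hYrefl := surjective_inclusionInDoubleDual_submodule hrefl
    (Submodule.isClosed_topologicalClosure (Submodule.span 𝕜 (range y)))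
  have : SeparableSpace Y := by
    have := ((countable_range y).isSeparable.span (R := 𝕜)).closure
    rw [← Submodule.topologicalClosure_coe] at this
    exact this.separableSpace
  have : SeparableSpace (StrongDual 𝕜 (StrongDual 𝕜 Y)) :=
    hYrefl.denseRange.separableSpace (inclusionInDoubleDual 𝕜 Y).continuous
  have : SeparableSpace (StrongDual 𝕜 Y) := separableSpace_of_separableSpace_strongDual (𝕜 := 𝕜)
  let z : ℕ → WeakDual 𝕜 (StrongDual 𝕜 Y) := fun n => StrongDual.toWeakDual
    (inclusionInDoubleDual 𝕜 Y ⟨y n, Submodule.le_topologicalClosure _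
      (Submodule.subset_span ⟨n, rfl⟩)⟩)
  obtain ⟨Ξ, -, σ, hσ, hzΞ⟩ := WeakDual.isSeqCompact_closedBall 𝕜 (StrongDual 𝕜 Y) 0 C
    (x := z) fun n => by
      simpa [z] using (double_dual_bound 𝕜 Y _).trans (hy n)
  obtain ⟨w, hw⟩ := hYrefl (WeakDual.toStrongDual Ξ)
  refine ⟨w, σ, hσ, fun φ => ?_⟩
  have := ((WeakDual.eval_continuous (φ.comp Y.subtypeL)).tendsto Ξ).comp hzΞ
  have hΞ : Ξ (φ.comp Y.subtypeL) = φ w := congr($hw (φ.comp Y.subtypeL)).symm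
  rwa [hΞ] at this

end FunctionalAnalysis

section Variational

variable {X : Type*} [NormedAddCommGroup X] [NormedSpace ℝ X] {Xp Xt : Submodule ℝ X}
  {P : X →L[ℝ] X} {J I : X → ℝ} {J' I' : X → X →L[ℝ] ℝ}

/-- `rayPlus Y u` is the paper's `X̂(u) = [0,∞)u ⊕ X̃`, and `linePlus Y u` is `X(u) = ℝu ⊕ X̃`. -/
def rayPlus (Y : Submodule ℝ X) (u : X) : Set X := {w | ∃ t : ℝ, 0 ≤ t ∧ ∃ v ∈ Y, w = t • u + v}

def linePlus (Y : Submodule ℝ X) (u : X) : Set X := {z | ∃ t : ℝ, ∃ v ∈ Y, z = t • u + v}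

/-- T-convergence: the `X⁺`-components `P wₙ` converge in norm and the `X̃`-components
`wₙ - P wₙ` converge weakly. -/
def TTendsto (P : X →L[ℝ] X) (w : ℕ → X) (m : X) : Prop :=
  Tendsto (fun n => P (w n)) atTop (𝓝 (P m)) ∧
    ∀ φ : StrongDual ℝ X, Tendsto (fun n => φ (w n - P (w n))) atTop (𝓝 (φ (m - P m)))

theorem mem_linePlus_of_mem_rayPlus {Y : Submodule ℝ X} {u w : X} (hw : w ∈ rayPlus Y u) :
    w ∈ linePlus Y u := by
  obtain ⟨t, -, v, hv, rfl⟩ := hw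
  exact ⟨t, v, hv, rfl⟩

theorem rayPlus_subset_rayPlus {Y : Submodule ℝ X} {u w₀ : X} {s : ℝ} (hs : 0 < s)
    (hw₀ : w₀ ∈ Y) : rayPlus Y u ⊆ rayPlus Y (s • u + w₀) := by
  rintro _ ⟨t, ht, v, hv, rfl⟩
  refine ⟨t / s, div_nonneg ht hs.le, v - (t / s) • w₀, Y.sub_mem hv (Y.smul_mem _ hw₀), ?_⟩
  rw [smul_add, smul_smul, div_mul_cancel₀ _ hs.ne']
  abel

theorem norm_map_smul_add (hPt : ∀ x ∈ Xt, P x = 0) (u : X) {t : ℝ} (ht : 0 ≤ t) {v : X}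
    (hv : v ∈ Xt) : ‖P (t • u + v)‖ = t * ‖P u‖ := by
  rw [map_add, map_smul, hPt v hv, add_zero, norm_smul, Real.norm_of_nonneg ht]

theorem HasFDerivAt.hasDerivAt_line {f : X → ℝ} {f' : X →L[ℝ] ℝ} {x : X}
    (hf : HasFDerivAt f f' x) (z : X) : HasDerivAt (fun s : ℝ => f (x + s • z)) (f' z) 0 := by
  have hline : HasDerivAt (fun s : ℝ => x + s • z) z 0 := by
    simpa using ((hasDerivAt_id (0 : ℝ)).smul_const z).const_add x
  exact (by simpa using hf : HasFDerivAt f f' (x + (0 : ℝ) • z)).comp_hasDerivAt 0 hline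

section Derivative

variable {m : X} {J'm I'm : X →L[ℝ] ℝ}

theorem hasFDerivAt_apply_self_eq (hJ : HasFDerivAt J J'm m) (hI : HasFDerivAt I I'm m)
    (hJI : ∀ x : X, J x = (1 / 2) * ‖P x‖ ^ 2 - I x) : J'm m = ‖P m‖ ^ 2 - I'm m := by
  have hsq : HasDerivAt (fun s : ℝ => (1 / 2) * ‖P m‖ ^ 2 * (1 + s) ^ 2) (‖P m‖ ^ 2) 0 :=
    ((((hasDerivAt_id (0 : ℝ)).const_add 1).pow 2).const_mul _).congr_deriv (by norm_num; ring)
  refine (hJ.hasDerivAt_line m).unique ((hsq.sub (hI.hasDerivAt_line m)).congr_of_eventuallyEq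
    (Eventually.of_forall fun s => ?_))
  simp only [Pi.sub_apply]
  rw [hJI, show m + s • m = (1 + s) • m by rw [add_smul, one_smul], map_smul, norm_smul, mul_pow,
    Real.norm_eq_abs, sq_abs]
  ring

theorem hasFDerivAt_apply_eq_neg_of_map_eq_zero (hJ : HasFDerivAt J J'm m)
    (hI : HasFDerivAt I I'm m) (hJI : ∀ x : X, J x = (1 / 2) * ‖P x‖ ^ 2 - I x) {v : X} (hv : P v = 0) :
    J'm v = -I'm v := by
  refine (hJ.hasDerivAt_line v).unique
    (((hasDerivAt_const (0 : ℝ) ((1 / 2) * ‖P m‖ ^ 2)).sub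
      (hI.hasDerivAt_line v)).congr_of_eventuallyEq (Eventually.of_forall fun s => ?_))
    |>.trans (zero_sub _)
  simp only [Pi.sub_apply]
  rw [hJI, map_add, map_smul, hv, smul_zero, add_zero]

end Derivative

theorem J_zero (hJI : ∀ x : X, J x = (1 / 2) * ‖P x‖ ^ 2 - I x) (hI0 : I 0 = 0) : J 0 = 0 := by
  simp [hJI, hI0]

theorem J_nonpos_of_mem (hJI : ∀ x : X, J x = (1 / 2) * ‖P x‖ ^ 2 - I x)
    (hPt : ∀ x ∈ Xt, P x = 0) (hIpos : ∀ x : X, 0 ≤ I x) {v : X} (hv : v ∈ Xt) : J v ≤ 0 := by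
  rw [hJI, hPt v hv, norm_zero]
  linarith [hIpos v]

/-- (B3) says exactly that a point `m` with `I'(m)[m] = ‖m⁺‖²` and `I'(m) = 0` on `X̃` is the strict
maximum of `J` on `X̂(m)`. -/
theorem J_smul_add_lt (hJI : ∀ x : X, J x = (1 / 2) * ‖P x‖ ^ 2 - I x)
    (hPt : ∀ x ∈ Xt, P x = 0)
    (hB3 : ∀ (u : X) (t : ℝ) (v : X), 0 ≤ t → v ∈ Xt → t • u + v ≠ u →
      ((t ^ 2 - 1) / 2) * I' u u + t * I' u v + I u - I (t • u + v) < 0)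
    {m : X} (hmm : I' m m = ‖P m‖ ^ 2) (hmv : ∀ v ∈ Xt, I' m v = 0)
    {τ : ℝ} (hτ : 0 ≤ τ) {v : X} (hv : v ∈ Xt) (hne : τ • m + v ≠ m) :
    J (τ • m + v) < J m := by
  have h := hB3 m τ v hτ hv hne
  rw [hmm, hmv v hv] at h
  rw [hJI, hJI, norm_map_smul_add hPt m hτ hv]
  nlinarith

theorem notMem_of_critical (hJI : ∀ x : X, J x = (1 / 2) * ‖P x‖ ^ 2 - I x)
    (hPt : ∀ x ∈ Xt, P x = 0) (hI0 : I 0 = 0) (hIpos : ∀ x : X, 0 ≤ I x)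
    (hB3 : ∀ (u : X) (t : ℝ) (v : X), 0 ≤ t → v ∈ Xt → t • u + v ≠ u →
      ((t ^ 2 - 1) / 2) * I' u u + t * I' u v + I u - I (t • u + v) < 0)
    {m : X} (hmm : I' m m = ‖P m‖ ^ 2) (hmv : ∀ v ∈ Xt, I' m v = 0) (hm0 : m ≠ 0) : m ∉ Xt := by
  intro hm
  have h := J_smul_add_lt hJI hPt hB3 hmm hmv le_rfl Xt.zero_mem (by simpa using hm0.symm)
  rw [zero_smul, add_zero, J_zero hJI hI0] at h
  exact (J_nonpos_of_mem hJI hPt hIpos hm).not_gt h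

theorem J_lt_of_critical (hJd : ∀ x, HasFDerivAt J (J' x) x) (hId : ∀ x, HasFDerivAt I (I' x) x)
    (hJI : ∀ x : X, J x = (1 / 2) * ‖P x‖ ^ 2 - I x) (hPt : ∀ x ∈ Xt, P x = 0) (hI0 : I 0 = 0)
    (hIpos : ∀ x : X, 0 ≤ I x)
    (hB3 : ∀ (u : X) (t : ℝ) (v : X), 0 ≤ t → v ∈ Xt → t • u + v ≠ u →
      ((t ^ 2 - 1) / 2) * I' u u + t * I' u v + I u - I (t • u + v) < 0)
    {u m w : X} (hm : m ∈ rayPlus Xt u) (hm0 : m ≠ 0)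
    (hcrit : ∀ z ∈ linePlus Xt u, J' m z = 0) (hw : w ∈ rayPlus Xt u) (hne : w ≠ m) :
    J w < J m := by
  have hmm : I' m m = ‖P m‖ ^ 2 := by
    have h := hasFDerivAt_apply_self_eq (hJd m) (hId m) hJI
    rw [hcrit m (mem_linePlus_of_mem_rayPlus hm)] at h
    linarith
  have hmv : ∀ v ∈ Xt, I' m v = 0 := fun v hv => by
    have h := hasFDerivAt_apply_eq_neg_of_map_eq_zero (hJd m) (hId m) hJI (hPt v hv)
    rw [hcrit v ⟨0, v, hv, by rw [zero_smul, zero_add]⟩] at h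
    linarith
  have hmXt := notMem_of_critical hJI hPt hI0 hIpos hB3 hmm hmv hm0
  obtain ⟨s, hs, w₀, hw₀, rfl⟩ := hm
  have hs : 0 < s := hs.lt_of_ne' fun h => hmXt (by simpa [h] using hw₀)
  obtain ⟨τ, hτ, v, hv, rfl⟩ := rayPlus_subset_rayPlus hs hw₀ hw
  exact J_smul_add_lt hJI hPt hB3 hmm hmv hτ hv hne

theorem eventually_J_neg (hJI : ∀ x : X, J x = (1 / 2) * ‖P x‖ ^ 2 - I x)
    (hPt : ∀ x ∈ Xt, P x = 0)
    (hB2 : ∀ (t : ℕ → ℝ) (u : ℕ → X) (w : X), w ∈ Xp → w ≠ 0 →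
      Tendsto t atTop atTop → Tendsto (fun n => P (u n)) atTop (𝓝 w) →
      Tendsto (fun n => I (t n • u n) / (t n) ^ 2) atTop atTop)
    {u : X} (hPuXp : P u ∈ Xp) (hPu : P u ≠ 0) {t : ℕ → ℝ} (ht : Tendsto t atTop atTop)
    {v : ℕ → X} (hv : ∀ n, v n ∈ Xt) : ∀ᶠ n in atTop, J (t n • u + v n) < 0 := by
  -- apply (B2) to `uₙ = u + tₙ⁻¹ vₙ`, whose `X⁺`-component is constantly `P u`
  have hB := hB2 t (fun n => u + (t n)⁻¹ • v n) (P u) hPuXp hPu ht (by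
    simp only [map_add, map_smul, hPt _ (hv _), smul_zero, add_zero]
    exact tendsto_const_nhds)
  filter_upwards [hB.eventually_gt_atTop (‖P u‖ ^ 2 / 2), ht.eventually_gt_atTop 0] with n hIn htn
  rw [smul_add, smul_inv_smul₀ htn.ne', lt_div_iff₀ (by positivity)] at hIn
  rw [hJI, norm_map_smul_add hPt u htn.le (hv n)]
  nlinarith

theorem exists_le_of_J_nonneg (hJI : ∀ x : X, J x = (1 / 2) * ‖P x‖ ^ 2 - I x)
    (hPt : ∀ x ∈ Xt, P x = 0)
    (hB2 : ∀ (t : ℕ → ℝ) (u : ℕ → X) (w : X), w ∈ Xp → w ≠ 0 →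
      Tendsto t atTop atTop → Tendsto (fun n => P (u n)) atTop (𝓝 w) →
      Tendsto (fun n => I (t n • u n) / (t n) ^ 2) atTop atTop)
    {u : X} (hPuXp : P u ∈ Xp) (hPu : P u ≠ 0) :
    ∃ T : ℝ, ∀ t : ℝ, ∀ v ∈ Xt, 0 ≤ J (t • u + v) → t ≤ T := by
  by_contra! h
  choose t v hv hJ ht using fun n : ℕ => h n
  have htop : Tendsto t atTop atTop :=
    tendsto_atTop_mono (fun n => (ht n).le) tendsto_natCast_atTop_atTop
  obtain ⟨n, hn⟩ := (eventually_J_neg hJI hPt hB2 hPuXp hPu htop hv).exists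
  exact (hJ n).not_gt hn

theorem exists_norm_le_of_J_nonneg (hJI : ∀ x : X, J x = (1 / 2) * ‖P x‖ ^ 2 - I x)
    (hPt : ∀ x ∈ Xt, P x = 0) (hB1 : ∀ M : ℝ, ∃ R : ℝ, ∀ u : X, R ≤ ‖u‖ → M ≤ ‖P u‖ + I u)
    {u : X} {T : ℝ} (hT : ∀ t : ℝ, ∀ v ∈ Xt, 0 ≤ J (t • u + v) → t ≤ T) :
    ∃ R : ℝ, ∀ w ∈ rayPlus Xt u, 0 ≤ J w → ‖w‖ ≤ R := by
  obtain ⟨R, hR⟩ := hB1 (T * ‖P u‖ + (T * ‖P u‖) ^ 2 / 2 + 1)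
  refine ⟨R, ?_⟩
  rintro _ ⟨t, ht, v, hv, rfl⟩ hJ
  by_contra! hlt
  have hbig := hR _ hlt.le
  have htT : t * ‖P u‖ ≤ T * ‖P u‖ := mul_le_mul_of_nonneg_right (hT t v hv hJ) (norm_nonneg _)
  have htT2 := pow_le_pow_left₀ (by positivity) htT 2
  rw [hJI, norm_map_smul_add hPt u ht hv] at hJ
  rw [norm_map_smul_add hPt u ht hv] at hbig
  linarith

theorem bddAbove_image_J_rayPlus (hJI : ∀ x : X, J x = (1 / 2) * ‖P x‖ ^ 2 - I x)
    (hPt : ∀ x ∈ Xt, P x = 0) (hIpos : ∀ x : X, 0 ≤ I x)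
    {u : X} {T : ℝ} (hT : ∀ t : ℝ, ∀ v ∈ Xt, 0 ≤ J (t • u + v) → t ≤ T) :
    BddAbove (J '' rayPlus Xt u) := by
  refine ⟨max 0 ((T * ‖P u‖) ^ 2 / 2), ?_⟩
  rintro _ ⟨_, ⟨t, ht, v, hv, rfl⟩, rfl⟩
  rcases lt_or_ge (J (t • u + v)) 0 with hJ | hJ
  · exact le_max_of_le_left hJ.le
  · have htT : t * ‖P u‖ ≤ T * ‖P u‖ :=
      mul_le_mul_of_nonneg_right (hT t v hv hJ) (norm_nonneg _)
    have htT2 := pow_le_pow_left₀ (by positivity) htT 2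
    refine le_max_of_le_right ?_
    rw [hJI, norm_map_smul_add hPt u ht hv]
    linarith [hIpos (t • u + v)]

theorem exists_J_pos_rayPlus (hPm : ∀ x : X, P x ∈ Xp) (hQm : ∀ x : X, x - P x ∈ Xt)
    {r a : ℝ} (hr : 0 < r)
    (ha_def : a = sInf (J '' {x : X | x ∈ Xp ∧ ‖x‖ = r})) (ha : 0 < a)
    {u : X} (hPu : P u ≠ 0) : ∃ w ∈ rayPlus Xt u, 0 < J w := by
  set s := r / ‖P u‖
  have hs : 0 < s := div_pos hr (norm_pos_iff.2 hPu)
  have hmem : s • P u ∈ rayPlus Xt u :=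
    ⟨s, hs.le, -(s • (u - P u)), Xt.neg_mem (Xt.smul_mem s (hQm u)), by module⟩
  have hsphere : s • P u ∈ {x : X | x ∈ Xp ∧ ‖x‖ = r} :=
    ⟨Xp.smul_mem s (hPm u), by rw [norm_smul, Real.norm_of_nonneg hs.le,
      div_mul_cancel₀ _ (norm_ne_zero_iff.2 hPu)]⟩
  have hbdd : BddBelow (J '' {x : X | x ∈ Xp ∧ ‖x‖ = r}) := by
    by_contra hbdd
    rw [Real.sInf_of_not_bddBelow hbdd] at ha_def
    exact ha.ne' ha_def
  exact ⟨_, hmem, ha.trans_le (ha_def ▸ csInf_le hbdd (mem_image_of_mem J hsphere))⟩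

theorem le_J_of_TTendsto (hJI : ∀ x : X, J x = (1 / 2) * ‖P x‖ ^ 2 - I x)
    (hA2 : ∀ (u : ℕ → X) (v : X),
      Tendsto (fun n => P (u n)) atTop (𝓝 (P v)) →
      (∀ φ : X →L[ℝ] ℝ, Tendsto (fun n => φ (u n - P (u n))) atTop (𝓝 (φ (v - P v)))) →
      ∀ b : ℝ, b < I v → ∀ᶠ n in atTop, b < I (u n))
    {w : ℕ → X} {m : X} (hwm : TTendsto P w m) {c : ℝ}
    (hJw : Tendsto (fun n => J (w n)) atTop (𝓝 c)) : c ≤ J m := by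
  have hIw : Tendsto (fun n => I (w n)) atTop (𝓝 ((1 / 2) * ‖P m‖ ^ 2 - c)) :=
    ((hwm.1.norm.pow 2).const_mul (1 / 2)).sub hJw |>.congr fun n => by rw [hJI]; ring
  have hIm : I m ≤ (1 / 2) * ‖P m‖ ^ 2 - c := le_of_forall_lt_imp_le_of_dense fun b hb =>
    ge_of_tendsto hIw ((hA2 w m hwm.1 hwm.2 b hb).mono fun _ h => h.le)
  rw [hJI]
  linarith

theorem exists_subseq_TTendsto (hrefl : Function.Surjective (inclusionInDoubleDual ℝ X))
    (hXtcl : IsClosed (Xt : Set X)) (hPt : ∀ x ∈ Xt, P x = 0) (u : X) {t : ℕ → ℝ} {T : ℝ}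
    (ht : ∀ n, t n ∈ Icc 0 T) {v : ℕ → X} (hv : ∀ n, v n ∈ Xt) {C : ℝ} (hvC : ∀ n, ‖v n‖ ≤ C) :
    ∃ m ∈ rayPlus Xt u, ∃ σ : ℕ → ℕ, StrictMono σ ∧
      TTendsto P (fun n => t (σ n) • u + v (σ n)) m := by
  obtain ⟨t₀, ht₀, σ₁, hσ₁, ht₀lim⟩ := isCompact_Icc.tendsto_subseq ht
  obtain ⟨v₀, σ₂, hσ₂, hv₀lim⟩ :=
    exists_subseq_forall_strongDual_tendsto hrefl fun n => hvC (σ₁ n)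
  have hv₀ : v₀ ∈ Xt := Submodule.mem_of_forall_strongDual_tendsto hXtcl (fun n => hv _) hv₀lim
  have htlim : Tendsto (fun n => t (σ₁ (σ₂ n))) atTop (𝓝 t₀) := ht₀lim.comp hσ₂.tendsto_atTop
  have hP : ∀ s : ℝ, ∀ x ∈ Xt, P (s • u + x) = s • P u := fun s x hx => by
    rw [map_add, map_smul, hPt x hx, add_zero]
  refine ⟨t₀ • u + v₀, ⟨t₀, ht₀.1, v₀, hv₀, rfl⟩, σ₁ ∘ σ₂, hσ₁.comp hσ₂, ?_, fun φ => ?_⟩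
  · simp only [Function.comp_apply, hP _ _ (hv _), hP _ _ hv₀]
    exact htlim.smul_const _
  · have hQ : ∀ s : ℝ, ∀ x ∈ Xt, s • u + x - P (s • u + x) = s • (u - P u) + x :=
      fun s x hx => by rw [hP s x hx]; module
    rw [hQ _ _ hv₀, map_add, map_smul, smul_eq_mul]
    refine ((htlim.mul_const _).add (hv₀lim φ)).congr fun n => ?_
    simp only [Function.comp_apply]
    rw [hQ _ _ (hv _), map_add, map_smul, smul_eq_mul]

theorem exists_isMaxOn_J_rayPlus (hrefl : Function.Surjective (inclusionInDoubleDual ℝ X))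
    (hXtcl : IsClosed (Xt : Set X)) (hPm : ∀ x : X, P x ∈ Xp) (hQm : ∀ x : X, x - P x ∈ Xt)
    (hPt : ∀ x ∈ Xt, P x = 0) (hJI : ∀ x : X, J x = (1 / 2) * ‖P x‖ ^ 2 - I x)
    (hIpos : ∀ x : X, 0 ≤ I x)
    (hA2 : ∀ (u : ℕ → X) (v : X),
      Tendsto (fun n => P (u n)) atTop (𝓝 (P v)) →
      (∀ φ : X →L[ℝ] ℝ, Tendsto (fun n => φ (u n - P (u n))) atTop (𝓝 (φ (v - P v)))) →
      ∀ b : ℝ, b < I v → ∀ᶠ n in atTop, b < I (u n))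
    {r a : ℝ} (hr : 0 < r) (ha_def : a = sInf (J '' {x : X | x ∈ Xp ∧ ‖x‖ = r})) (ha : 0 < a)
    (hB1 : ∀ M : ℝ, ∃ R : ℝ, ∀ u : X, R ≤ ‖u‖ → M ≤ ‖P u‖ + I u)
    (hB2 : ∀ (t : ℕ → ℝ) (u : ℕ → X) (w : X), w ∈ Xp → w ≠ 0 →
      Tendsto t atTop atTop → Tendsto (fun n => P (u n)) atTop (𝓝 w) →
      Tendsto (fun n => I (t n • u n) / (t n) ^ 2) atTop atTop)
    {u : X} (hPu : P u ≠ 0) : ∃ m ∈ rayPlus Xt u, IsMaxOn J (rayPlus Xt u) m ∧ 0 < J m := by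
  obtain ⟨T, hT⟩ := exists_le_of_J_nonneg hJI hPt hB2 (hPm u) hPu
  obtain ⟨R, hR⟩ := exists_norm_le_of_J_nonneg hJI hPt hB1 hT
  have hbdd := bddAbove_image_J_rayPlus hJI hPt hIpos hT
  obtain ⟨w₁, hw₁, hJw₁⟩ := exists_J_pos_rayPlus hPm hQm hr ha_def ha hPu
  set c := sSup (J '' rayPlus Xt u)
  have hc : 0 < c := hJw₁.trans_le (le_csSup hbdd (mem_image_of_mem J hw₁))
  obtain ⟨y, -, hyc, hy⟩ := exists_seq_tendsto_sSup ⟨_, mem_image_of_mem J hw₁⟩ hbdd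
  choose w hw hJw using hy
  -- from some index `N` on the maximizing sequence has `J > 0`, hence is bounded
  obtain ⟨N, hN⟩ := eventually_atTop.1 (hyc.eventually (eventually_gt_nhds hc))
  choose t ht v hv hwtv using fun n => hw (n + N)
  have hJpos : ∀ n, 0 ≤ J (t n • u + v n) := fun n => by
    rw [← hwtv, hJw]
    exact (hN _ (Nat.le_add_left N n)).le
  have htT : ∀ n, t n ∈ Icc 0 T := fun n => ⟨ht n, hT _ _ (hv n) (hJpos n)⟩
  have hvC : ∀ n, ‖v n‖ ≤ R + T * ‖u‖ := fun n => calc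
    ‖v n‖ = ‖(t n • u + v n) - t n • u‖ := by rw [add_sub_cancel_left]
    _ ≤ ‖t n • u + v n‖ + t n * ‖u‖ := (norm_sub_le _ _).trans_eq (by
      rw [norm_smul, Real.norm_of_nonneg (ht n)])
    _ ≤ R + T * ‖u‖ := add_le_add (hR _ ⟨t n, ht n, v n, hv n, rfl⟩ (hJpos n))
      (mul_le_mul_of_nonneg_right (htT n).2 (norm_nonneg _))
  obtain ⟨m, hm, σ, hσ, hwm⟩ := exists_subseq_TTendsto hrefl hXtcl hPt u htT hv hvC
  have hcm : c ≤ J m := le_J_of_TTendsto hJI hA2 hwm <|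
    (hyc.comp ((tendsto_add_atTop_nat N).comp hσ.tendsto_atTop)).congr fun n => by
      simp only [Function.comp_apply, ← hwtv, hJw]
  exact ⟨m, hm, isMaxOn_iff.2 fun w hw => (le_csSup hbdd (mem_image_of_mem J hw)).trans hcm,
    hc.trans_le hcm⟩

theorem J'_eq_zero_of_isMaxOn (hJd : ∀ x, HasFDerivAt J (J' x) x) {u v₀ : X} {t₀ : ℝ}
    (ht₀ : 0 < t₀) (hv₀ : v₀ ∈ Xt) (hmax : IsMaxOn J (rayPlus Xt u) (t₀ • u + v₀)) :
    ∀ z ∈ linePlus Xt u, J' (t₀ • u + v₀) z = 0 := by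
  rintro _ ⟨α, v, hv, rfl⟩
  have hloc : IsLocalMax (fun s : ℝ => J (t₀ • u + v₀ + s • (α • u + v))) 0 := by
    have hcoeff : Tendsto (fun s : ℝ => t₀ + s * α) (𝓝 0) (𝓝 t₀) :=
      (by fun_prop : Continuous fun s : ℝ => t₀ + s * α).tendsto' 0 t₀ (by simp)
    filter_upwards [hcoeff.eventually (eventually_gt_nhds ht₀)] with s hs
    rw [zero_smul, add_zero]
    exact hmax ⟨t₀ + s * α, hs.le, v₀ + s • v, Xt.add_mem hv₀ (Xt.smul_mem s hv), by module⟩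
  exact hloc.hasDerivAt_eq_zero ((hJd _).hasDerivAt_line _)

end Variational

theorem A5_holds_general
    {X : Type*} [NormedAddCommGroup X] [NormedSpace ℝ X]
    -- X is reflexive
    (hrefl : Function.Surjective (NormedSpace.inclusionInDoubleDual ℝ X))
    -- topological direct sum decomposition X = X⁺ ⊕ X̃, with projection P onto X⁺ along X̃
    (Xp Xt : Submodule ℝ X)
    (hXtcl : IsClosed (Xt : Set X))
    (P : X →L[ℝ] X)
    (hPm : ∀ x : X, P x ∈ Xp) (hQm : ∀ x : X, x - P x ∈ Xt)
    (hPt : ∀ x ∈ Xt, P x = 0)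
    -- J, I of class C¹ with J(u) = ½‖u⁺‖² - I(u)
    (J I : X → ℝ) (J' I' : X → X →L[ℝ] ℝ)
    (hJd : ∀ x, HasFDerivAt J (J' x) x)
    (hId : ∀ x, HasFDerivAt I (I' x) x)
    (hJI : ∀ x : X, J x = (1 / 2) * ‖P x‖ ^ 2 - I x)
    -- (A1)
    (hI0 : I 0 = 0) (hIpos : ∀ x : X, 0 ≤ I x)
    -- (A2) : T-convergence implies liminf I(uₙ) ≥ I(v)
    (hA2 : ∀ (u : ℕ → X) (v : X),
      Tendsto (fun n => P (u n)) atTop (𝓝 (P v)) →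
      (∀ φ : X →L[ℝ] ℝ, Tendsto (fun n => φ (u n - P (u n))) atTop (𝓝 (φ (v - P v)))) →
      ∀ b : ℝ, b < I v → ∀ᶠ n in atTop, b < I (u n))
    -- (A4)
    (r a : ℝ) (hr : 0 < r)
    (ha_def : a = sInf (J '' {x : X | x ∈ Xp ∧ ‖x‖ = r})) (ha : 0 < a)
    -- (B1) : ‖u⁺‖ + I(u) → ∞ as ‖u‖ → ∞
    (hB1 : ∀ M : ℝ, ∃ R : ℝ, ∀ u : X, R ≤ ‖u‖ → M ≤ ‖P u‖ + I u)
    -- (B2)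
    (hB2 : ∀ (t : ℕ → ℝ) (u : ℕ → X) (w : X), w ∈ Xp → w ≠ 0 →
      Tendsto t atTop atTop → Tendsto (fun n => P (u n)) atTop (𝓝 w) →
      Tendsto (fun n => I (t n • u n) / (t n) ^ 2) atTop atTop)
    -- (B3)
    (hB3 : ∀ (u : X) (t : ℝ) (v : X), 0 ≤ t → v ∈ Xt → t • u + v ≠ u →
      ((t ^ 2 - 1) / 2) * I' u u + t * I' u v + I u - I (t • u + v) < 0)
    :
    ∀ u : X, u ∉ Xt →
      ∃ m : X,
        (∃ t : ℝ, 0 ≤ t ∧ ∃ v ∈ Xt, m = t • u + v) ∧ m ≠ 0 ∧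
        (∀ z : X, (∃ t : ℝ, ∃ v ∈ Xt, z = t • u + v) → J' m z = 0) ∧
        (∀ w : X, (∃ t : ℝ, 0 ≤ t ∧ ∃ v ∈ Xt, w = t • u + v) → w ≠ 0 →
          (∀ z : X, (∃ t : ℝ, ∃ v ∈ Xt, z = t • u + v) → J' w z = 0) → w = m) ∧
        (∀ w : X, (∃ t : ℝ, 0 ≤ t ∧ ∃ v ∈ Xt, w = t • u + v) → w ≠ m → J w < J m) := by
  intro u hu
  have hPu : P u ≠ 0 := fun h => hu (by simpa [h] using hQm u)
  obtain ⟨m, hm, hmax, hJm⟩ :=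
    exists_isMaxOn_J_rayPlus hrefl hXtcl hPm hQm hPt hJI hIpos hA2 hr ha_def ha hB1 hB2 hPu
  have hm0 : m ≠ 0 := by
    rintro rfl
    exact hJm.ne' (J_zero hJI hI0)
  have hcrit : ∀ z ∈ linePlus Xt u, J' m z = 0 := by
    obtain ⟨t₀, ht₀, v₀, hv₀, rfl⟩ := hm
    refine J'_eq_zero_of_isMaxOn hJd (ht₀.lt_of_ne' fun h => ?_) hv₀ hmax
    exact (J_nonpos_of_mem hJI hPt hIpos (by simpa [h] using hv₀)).not_gt hJm
  have hlt : ∀ {m w : X}, m ∈ rayPlus Xt u → m ≠ 0 → (∀ z ∈ linePlus Xt u, J' m z = 0) →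
      w ∈ rayPlus Xt u → w ≠ m → J w < J m :=
    J_lt_of_critical hJd hId hJI hPt hI0 hIpos hB3
  refine ⟨m, hm, hm0, hcrit, fun w hw hw0 hwcrit => ?_, fun w hw hne => hlt hm hm0 hcrit hw hne⟩
  by_contra hne
  exact (hlt hw hw0 hwcrit hm (Ne.symm hne)).asymm (hlt hm hm0 hcrit hw hne)

/-- Under (A1), (A2), (A4), (B1)–(B3), and assuming `X⁺` is a Hilbert space
whose scalar product generates the norm, assumption (A5) holds: for every `u ∈ X∖X̃` there is
a unique nontrivial critical point `m̂(u) ∈ X̂(u)` of `J|_{X(u)}`, which is moreover the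
unique global maximum of `J` on `X̂(u)`. -/
theorem A5_holds
    {X : Type*} [NormedAddCommGroup X] [NormedSpace ℝ X] [CompleteSpace X]
    -- X is reflexive
    (hrefl : Function.Surjective (NormedSpace.inclusionInDoubleDual ℝ X))
    -- topological direct sum decomposition X = X⁺ ⊕ X̃, with projection P onto X⁺ along X̃
    (Xp Xt : Submodule ℝ X)
    (hXpcl : IsClosed (Xp : Set X)) (hXtcl : IsClosed (Xt : Set X))
    (P : X →L[ℝ] X)
    (hPm : ∀ x : X, P x ∈ Xp) (hQm : ∀ x : X, x - P x ∈ Xt)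
    (hPp : ∀ x ∈ Xp, P x = x) (hPt : ∀ x ∈ Xt, P x = 0)
    -- ‖u‖² = ‖u⁺‖² + ‖ũ‖²
    (hnorm : ∀ x : X, ‖x‖ ^ 2 = ‖P x‖ ^ 2 + ‖x - P x‖ ^ 2)
    -- J, I of class C¹ with J(u) = ½‖u⁺‖² - I(u)
    (J I : X → ℝ) (J' I' : X → X →L[ℝ] ℝ)
    (hJd : ∀ x, HasFDerivAt J (J' x) x) (hJ'c : Continuous J')
    (hId : ∀ x, HasFDerivAt I (I' x) x) (hI'c : Continuous I')
    (hJI : ∀ x : X, J x = (1 / 2) * ‖P x‖ ^ 2 - I x)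
    -- X⁺ is a Hilbert space with ⟨u,u⟩ = ‖u‖² (parallelogram law on X⁺)
    (hpar : ∀ u ∈ Xp, ∀ v ∈ Xp, ‖u + v‖ ^ 2 + ‖u - v‖ ^ 2 = 2 * ‖u‖ ^ 2 + 2 * ‖v‖ ^ 2)
    -- (A1)
    (hI0 : I 0 = 0) (hIpos : ∀ x : X, 0 ≤ I x)
    -- (A2) : T-convergence implies liminf I(uₙ) ≥ I(v)
    (hA2 : ∀ (u : ℕ → X) (v : X),
      Tendsto (fun n => P (u n)) atTop (𝓝 (P v)) →
      (∀ φ : X →L[ℝ] ℝ, Tendsto (fun n => φ (u n - P (u n))) atTop (𝓝 (φ (v - P v)))) →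
      ∀ b : ℝ, b < I v → ∀ᶠ n in atTop, b < I (u n))
    -- (A4)
    (r a : ℝ) (hr : 0 < r)
    (ha_def : a = sInf (J '' {x : X | x ∈ Xp ∧ ‖x‖ = r})) (ha : 0 < a)
    -- (B1) : ‖u⁺‖ + I(u) → ∞ as ‖u‖ → ∞
    (hB1 : ∀ M : ℝ, ∃ R : ℝ, ∀ u : X, R ≤ ‖u‖ → M ≤ ‖P u‖ + I u)
    -- (B2)
    (hB2 : ∀ (t : ℕ → ℝ) (u : ℕ → X) (w : X), w ∈ Xp → w ≠ 0 →
      Tendsto t atTop atTop → Tendsto (fun n => P (u n)) atTop (𝓝 w) →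
      Tendsto (fun n => I (t n • u n) / (t n) ^ 2) atTop atTop)
    -- (B3)
    (hB3 : ∀ (u : X) (t : ℝ) (v : X), 0 ≤ t → v ∈ Xt → t • u + v ≠ u →
      ((t ^ 2 - 1) / 2) * I' u u + t * I' u v + I u - I (t • u + v) < 0)
    :
    ∀ u : X, u ∉ Xt →
      ∃ m : X,
        (∃ t : ℝ, 0 ≤ t ∧ ∃ v ∈ Xt, m = t • u + v) ∧ m ≠ 0 ∧
        (∀ z : X, (∃ t : ℝ, ∃ v ∈ Xt, z = t • u + v) → J' m z = 0) ∧
        (∀ w : X, (∃ t : ℝ, 0 ≤ t ∧ ∃ v ∈ Xt, w = t • u + v) → w ≠ 0 →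
          (∀ z : X, (∃ t : ℝ, ∃ v ∈ Xt, z = t • u + v) → J' w z = 0) → w = m) ∧
        (∀ w : X, (∃ t : ℝ, 0 ≤ t ∧ ∃ v ∈ Xt, w = t • u + v) → w ≠ m → J w < J m) :=
  A5_holds_general hrefl Xp Xt hXtcl P hPm hQm hPt J I J' I' hJd hId hJI hI0 hIpos hA2 r a hr ha_def
    ha hB1 hB2 hB3
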